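/- Completeness for the pure syllogistic fragment: let ⊢ be the smallest relation on pairs of constants containing a given set Γ of pairs, closed under reflexivity (a ⊢ a) and transitivity (BARBARA). Then for constants a, b: ⊢ relates a to b if and only if in every model (interpretation I of constants as subsets of some set) satisfying I(c) ⊆ I(d) for all (c,d) ∈ Γ, we have I(a) ⊆ I(b). -/
import Mathlib

theorem syllogistic_completeness {A : Type*} (Γ : Set (A × A)) (a b : A) :
    Relation.ReflTransGen (fun x y => (x, y) ∈ Γ) a b ↔
      ∀ (M : Type) (I : A → Set M),
        (∀ p ∈ Γ, I p.1 ⊆ I p.2) → I a ⊆ I b := by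
  constructor
  · intro h M I hI
    induction h with
    | refl => exact le_refl _
    | tail _ hcd ih => exact ih.trans (hI _ hcd)
  · intro h
    exact @h Unit (fun c => {_u | Relation.ReflTransGen (fun x y => (x, y) ∈ Γ) a c})
      (fun p hp _ hu => hu.tail hp) ()
      (Relation.ReflTransGen.refl : Relation.ReflTransGen (fun x y => (x, y) ∈ Γ) a a)
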